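/- arXiv:2310.08289 — 3 statements merged into one kernel-verified Lean document; each statement's English description precedes it below -/
import Mathlib

section
/- Let A be an n×n positive definite Hermitian complex matrix, and for j = 1,…,J let B_j and B_j' be n_j×n_j positive semidefinite Hermitian complex matrices and C_j be n×n_j complex matrices. Then ln det(A + Σ_{j=1}^J C_j B_j C_j^H) ≤ ln det(A + Σ_{j=1}^J C_j B_j' C_j^H) + Σ_{j=1}^J Re Tr( C_j^H (A + Σ_{l=1}^J C_l B_l' C_l^H)^{-1} C_j (B_j − B_j') ). -/
/-! This is the tangent-line inequality for the concave function `log det` on positive definite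
matrices. For `X, Y ≻ 0` put `R = Y ^ (1/2)` and `Z = R⁻¹ X R⁻¹ ≻ 0`; then
`det X = det Z * det Y` and `tr Z = tr (Y⁻¹ X)`, so `log det X - log det Y = ∑ᵢ log λᵢ(Z)` is at
most `∑ᵢ (λᵢ(Z) - 1) = Re tr (Y⁻¹ (X - Y))`. With `X - Y = ∑ⱼ Cⱼ (Bⱼ - B'ⱼ) Cⱼᴴ`, cyclicity of
the trace splits the right-hand side into the stated sum. -/

open Matrix
open scoped ComplexOrder MatrixOrder

namespace Matrix

theorem trace_mul_sum_mul_mul {ι R n : Type*} [Fintype n] [CommSemiring R]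
    {m : ι → Type*} [∀ j, Fintype (m j)] (s : Finset ι) (M : Matrix n n R)
    (C : ∀ j, Matrix n (m j) R) (D : ∀ j, Matrix (m j) (m j) R) (E : ∀ j, Matrix (m j) n R) :
    trace (M * ∑ j ∈ s, C j * D j * E j) = ∑ j ∈ s, trace (E j * M * C j * D j) := by
  rw [Matrix.mul_sum, trace_sum]
  refine Finset.sum_congr rfl fun j _ ↦ ?_
  rw [← Matrix.mul_assoc, ← Matrix.mul_assoc, trace_mul_comm, ← Matrix.mul_assoc,
    ← Matrix.mul_assoc]

variable {𝕜 n : Type*} [RCLike 𝕜] [Fintype n] [DecidableEq n]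

theorem PosDef.log_re_det_le_re_trace_sub_card {Z : Matrix n n 𝕜} (hZ : Z.PosDef) :
    Real.log (RCLike.re Z.det) ≤ RCLike.re Z.trace - Fintype.card n := by
  have hdet : RCLike.re Z.det = ∏ i, hZ.1.eigenvalues i := by
    rw [hZ.1.det_eq_prod_eigenvalues, ← RCLike.ofReal_prod, RCLike.ofReal_re]
  have htr : RCLike.re Z.trace = ∑ i, hZ.1.eigenvalues i := by
    rw [hZ.1.trace_eq_sum_eigenvalues, ← RCLike.ofReal_sum, RCLike.ofReal_re]
  rw [hdet, htr, Real.log_prod fun i _ ↦ (hZ.eigenvalues_pos i).ne', Fintype.card_eq_sum_ones,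
    Nat.cast_sum, Nat.cast_one, ← Finset.sum_sub_distrib]
  exact Finset.sum_le_sum fun i _ ↦ Real.log_le_sub_one_of_pos (hZ.eigenvalues_pos i)

theorem PosDef.log_re_det_le {X Y : Matrix n n 𝕜} (hX : X.PosDef) (hY : Y.PosDef) :
    Real.log (RCLike.re X.det)
      ≤ Real.log (RCLike.re Y.det) + RCLike.re (Y⁻¹ * (X - Y)).trace := by
  set R := CFC.sqrt Y
  have hR : R.IsHermitian := (CFC.sqrt_nonneg Y).posSemidef.isHermitian
  have hRR : R * R = Y := CFC.sqrt_mul_sqrt_self Y hY.posSemidef.nonneg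
  have hYdet : IsUnit Y.det := (isUnit_iff_isUnit_det Y).mp hY.isUnit
  have hRdet : IsUnit R.det := by
    have hsq : IsUnit (R.det * R.det) := by rwa [← det_mul, hRR]
    exact isUnit_of_mul_isUnit_left hsq
  set Z := R⁻¹ * X * R⁻¹
  have hZ : Z.PosDef := by
    have := (Matrix.IsUnit.posDef_star_left_conjugate_iff
      (isUnit_nonsing_inv_iff.mpr ((isUnit_iff_isUnit_det R).mpr hRdet))).mpr hX
    rwa [star_eq_conjTranspose, hR.inv.eq] at this
  have hdet : X.det = Z.det * Y.det := by
    have hXZ : X = R * Z * R := by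
      simp only [Z, ← mul_assoc, mul_nonsing_inv R hRdet, one_mul]
      rw [mul_assoc, nonsing_inv_mul R hRdet, mul_one]
    rw [congrArg det hXZ, det_mul (R * Z), det_mul R Z, ← hRR, det_mul R R]
    ring
  have htr : Z.trace = (Y⁻¹ * (X - Y)).trace + Fintype.card n := by
    rw [trace_mul_cycle, ← mul_inv_rev, hRR, mul_sub, nonsing_inv_mul Y hYdet, trace_sub,
      trace_one]
    ring
  obtain ⟨hYre, hYim⟩ := RCLike.pos_iff.mp hY.det_pos
  have hZre := (RCLike.pos_iff.mp hZ.det_pos).1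
  have hlogZ := hZ.log_re_det_le_re_trace_sub_card
  rw [htr, map_add, RCLike.natCast_re] at hlogZ
  rw [hdet, RCLike.mul_re, hYim, mul_zero, sub_zero, Real.log_mul hZre.ne' hYre.ne']
  linarith

end Matrix

/-- Lemma 1 (log-det linearization upper bound): for a positive definite Hermitian `A`
and positive semidefinite Hermitian `B j`, `B' j`,
`ln det(A + ∑ C_j B_j C_jᴴ) ≤ ln det(A + ∑ C_j B'_j C_jᴴ)
  + ∑_j Re Tr(C_jᴴ (A + ∑_l C_l B'_l C_lᴴ)⁻¹ C_j (B_j − B'_j))`. -/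
theorem logdet_linearization_upper_bound
    (n J : ℕ) (nj : Fin J → ℕ)
    (A : Matrix (Fin n) (Fin n) ℂ) (hA : A.PosDef)
    (B B' : ∀ j : Fin J, Matrix (Fin (nj j)) (Fin (nj j)) ℂ)
    (hB : ∀ j, (B j).PosSemidef) (hB' : ∀ j, (B' j).PosSemidef)
    (C : ∀ j : Fin J, Matrix (Fin n) (Fin (nj j)) ℂ) :
    Real.log ((A + ∑ j, C j * B j * (C j)ᴴ).det.re)
      ≤ Real.log ((A + ∑ j, C j * B' j * (C j)ᴴ).det.re)
        + ∑ j, (Matrix.trace ((C j)ᴴ * (A + ∑ l, C l * B' l * (C l)ᴴ)⁻¹ * C j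
            * (B j - B' j))).re := by
  have hsum (D : ∀ j, Matrix (Fin (nj j)) (Fin (nj j)) ℂ) (hD : ∀ j, (D j).PosSemidef) :
      (∑ j, C j * D j * (C j)ᴴ).PosSemidef :=
    posSemidef_sum _ fun j _ ↦ (hD j).mul_mul_conjTranspose_same (C j)
  have hdiff : (A + ∑ j, C j * B j * (C j)ᴴ) - (A + ∑ j, C j * B' j * (C j)ᴴ)
      = ∑ j, C j * (B j - B' j) * (C j)ᴴ := by
    simp only [add_sub_add_left_eq_sub, ← Finset.sum_sub_distrib, Matrix.mul_sub, Matrix.sub_mul]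
  have key := (hA.add_posSemidef (hsum B hB)).log_re_det_le (hA.add_posSemidef (hsum B' hB'))
  rwa [hdiff, trace_mul_sum_mul_mul, map_sum] at key
end

section
/- Let V and V̄ be n×m complex matrices, and let Y and Ȳ be n×n positive definite Hermitian complex matrices. Then ln det(I + V V^H Y^{-1}) ≥ ln det(I + V̄ V̄^H Ȳ^{-1}) − Tr(V̄ V̄^H Ȳ^{-1}) + 2 Re Tr(V̄^H Ȳ^{-1} V) − Tr( (Ȳ^{-1} − (V̄ V̄^H + Ȳ)^{-1})^H (V V^H + Y) ). -/
/-!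
With `A = V Vᴴ + Y`, the error covariance `E = 1 - Vᴴ A⁻¹ V` of the MMSE receiver equals
`(1 + Vᴴ Y⁻¹ V)⁻¹` (Woodbury), so `log det (1 + V Vᴴ Y⁻¹) = -log det E`. Completing the square
gives `E ≤ mseMatrix Y V U` for every receiver `U`, and `log x ≤ x - 1` applied to the eigenvalues
of `S E Sᴴ`, where `W = Sᴴ S`, gives `log det W + log det E ≤ tr (W E) - m` for every `W > 0`.
Hence `log det (1 + V Vᴴ Y⁻¹) ≥ log det W + m - tr (W · mseMatrix Y V U)` for all `U` and `W > 0`;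
the theorem is this bound at the MMSE receiver `U = (V̄ V̄ᴴ + Ȳ)⁻¹ V̄` of the point `(V̄, Ȳ)` and
the weight `W = 1 + V̄ᴴ Ȳ⁻¹ V̄`, the inverse of its error covariance, where it is tight.
-/

open Matrix
open scoped ComplexOrder MatrixOrder

namespace Matrix

variable {𝕜 n m : Type*} [RCLike 𝕜] [Fintype n] [Fintype m] [DecidableEq m]

open RCLike in
lemma _root_.RCLike.log_re_mul_of_pos {a b : 𝕜} (ha : 0 < a) (hb : 0 < b) :
    Real.log (re (a * b)) = Real.log (re a) + Real.log (re b) := by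
  obtain ⟨x, hx, rfl⟩ := RCLike.pos_iff_exists_ofReal.mp ha
  obtain ⟨y, hy, rfl⟩ := RCLike.pos_iff_exists_ofReal.mp hb
  rw [← RCLike.ofReal_mul, RCLike.ofReal_re, RCLike.ofReal_re, RCLike.ofReal_re,
    Real.log_mul hx.ne' hy.ne']

lemma PosSemidef.posDef_one_add_conjTranspose_mul_mul {Y : Matrix n n 𝕜} (hY : Y.PosSemidef)
    (V : Matrix n m 𝕜) : (1 + Vᴴ * Y * V).PosDef :=
  PosDef.one.add_posSemidef (hY.conjTranspose_mul_mul_same V)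

variable [DecidableEq n]

lemma PosDef.log_re_det_le_re_trace_sub_card_s2 {P : Matrix n n 𝕜} (hP : P.PosDef) :
    Real.log (RCLike.re P.det) ≤ RCLike.re P.trace - Fintype.card n := by
  rw [hP.isHermitian.det_eq_prod_eigenvalues, hP.isHermitian.trace_eq_sum_eigenvalues,
    ← RCLike.ofReal_prod, ← RCLike.ofReal_sum, RCLike.ofReal_re, RCLike.ofReal_re,
    Real.log_prod fun i _ => (hP.eigenvalues_pos i).ne']
  calc ∑ i, Real.log (hP.1.eigenvalues i) ≤ ∑ i, (hP.1.eigenvalues i - 1) :=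
        Finset.sum_le_sum fun i _ => Real.log_le_sub_one_of_pos (hP.eigenvalues_pos i)
    _ = _ := by simp [Finset.sum_sub_distrib]

lemma PosSemidef.re_trace_mul_nonneg {A B : Matrix n n 𝕜} (hA : A.PosSemidef)
    (hB : B.PosSemidef) : 0 ≤ RCLike.re (A * B).trace := by
  obtain ⟨S, rfl⟩ := CStarAlgebra.nonneg_iff_eq_star_mul_self.mp hA.nonneg
  rw [star_eq_conjTranspose, Matrix.mul_assoc, trace_mul_comm]
  exact (RCLike.nonneg_iff.mp (hB.mul_mul_conjTranspose_same S).trace_nonneg).1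

lemma PosDef.log_re_det_add_log_re_det_le {W E : Matrix n n 𝕜} (hW : W.PosDef)
    (hE : E.PosDef) :
    Real.log (RCLike.re W.det) + Real.log (RCLike.re E.det)
      ≤ RCLike.re (W * E).trace - Fintype.card n := by
  obtain ⟨S, rfl⟩ := CStarAlgebra.nonneg_iff_eq_star_mul_self.mp hW.posSemidef.nonneg
  have hS : IsUnit S := isUnit_of_mul_isUnit_right hW.isUnit
  have hSES : (S * E * star S).PosDef := (IsUnit.posDef_star_right_conjugate_iff hS).mpr hE
  have hdet : (S * E * star S).det = (star S * S).det * E.det := by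
    simp only [det_mul]; ring
  have htrace : (S * E * star S).trace = (star S * S * E).trace := by
    rw [trace_mul_comm, ← Matrix.mul_assoc]
  rw [← RCLike.log_re_mul_of_pos hW.det_pos hE.det_pos, ← hdet, ← htrace]
  exact hSES.log_re_det_le_re_trace_sub_card_s2

section CommRing

variable {α : Type*} [CommRing α]

lemma inv_one_add_mul_inv_mul {Y : Matrix n n α} (B : Matrix m n α) (V : Matrix n m α)
    (hY : IsUnit Y) (hA : IsUnit (V * B + Y)) :
    (1 + B * Y⁻¹ * V)⁻¹ = 1 - B * (V * B + Y)⁻¹ * V := by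
  have hY' : IsUnit Y.det := (isUnit_iff_isUnit_det Y).mp hY
  have := add_mul_mul_inv_eq_sub 1 B Y⁻¹ V isUnit_one (isUnit_nonsing_inv_iff.mpr hY)
    (by rwa [nonsing_inv_nonsing_inv Y hY', inv_one, Matrix.mul_one, add_comm])
  rwa [inv_one, Matrix.mul_one, Matrix.one_mul, Matrix.mul_one, nonsing_inv_nonsing_inv Y hY',
    add_comm Y] at this

lemma inv_add_mul_mul_one_add_mul_inv_mul {Y : Matrix n n α} (B : Matrix m n α)
    (V : Matrix n m α) (hY : IsUnit Y) (hA : IsUnit (V * B + Y)) :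
    (V * B + Y)⁻¹ * V * (1 + B * Y⁻¹ * V) = Y⁻¹ * V := by
  have : V * (1 + B * Y⁻¹ * V) = (V * B + Y) * (Y⁻¹ * V) := by
    rw [Matrix.add_mul, ← Matrix.mul_assoc Y, mul_nonsing_inv Y ((isUnit_iff_isUnit_det Y).mp hY)]
    simp only [Matrix.mul_add, Matrix.mul_assoc, Matrix.mul_one, Matrix.one_mul, add_comm]
  rw [Matrix.mul_assoc, this, ← Matrix.mul_assoc,
    nonsing_inv_mul _ ((isUnit_iff_isUnit_det _).mp hA), Matrix.one_mul]

end CommRing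

/-- The error covariance `𝔼[(s - Uᴴ y)(s - Uᴴ y)ᴴ]` of the linear receiver `U` for the signal
`y = V s + z`, where `s` is white and the noise `z` has covariance `Y`. -/
def mseMatrix (Y : Matrix n n 𝕜) (V U : Matrix n m 𝕜) : Matrix m m 𝕜 :=
  1 - Uᴴ * V - Vᴴ * U + Uᴴ * (V * Vᴴ + Y) * U

lemma mseMatrix_eq_add {Y : Matrix n n 𝕜} (V U : Matrix n m 𝕜)
    (hA : (V * Vᴴ + Y).IsHermitian) (hAu : IsUnit (V * Vᴴ + Y)) :
    mseMatrix Y V U = (1 - Vᴴ * (V * Vᴴ + Y)⁻¹ * V)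
      + (U - (V * Vᴴ + Y)⁻¹ * V)ᴴ * (V * Vᴴ + Y) * (U - (V * Vᴴ + Y)⁻¹ * V) := by
  set A := V * Vᴴ + Y
  have hAdet : IsUnit A.det := (isUnit_iff_isUnit_det A).mp hAu
  rw [mseMatrix, conjTranspose_sub, conjTranspose_mul, hA.inv.eq]
  simp only [Matrix.sub_mul, Matrix.mul_sub, Matrix.mul_assoc,
    mul_nonsing_inv_cancel_left A _ hAdet, nonsing_inv_mul_cancel_left A _ hAdet]
  abel

theorem sub_re_trace_mul_mseMatrix_le_log_re_det {Y : Matrix n n 𝕜} (hY : Y.PosDef)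
    (V U : Matrix n m 𝕜) {W : Matrix m m 𝕜} (hW : W.PosDef) :
    Real.log (RCLike.re W.det) + Fintype.card m - RCLike.re (W * mseMatrix Y V U).trace
      ≤ Real.log (RCLike.re (1 + Vᴴ * Y⁻¹ * V).det) := by
  have hF := hY.inv.posSemidef.posDef_one_add_conjTranspose_mul_mul V
  have hA : (V * Vᴴ + Y).PosDef := hY.posSemidef_add (posSemidef_self_mul_conjTranspose V)
  have hE : (1 - Vᴴ * (V * Vᴴ + Y)⁻¹ * V).PosDef := by
    rw [← inv_one_add_mul_inv_mul _ _ hY.isUnit hA.isUnit]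
    exact hF.inv
  have hlog : Real.log (RCLike.re (1 + Vᴴ * Y⁻¹ * V).det)
      + Real.log (RCLike.re (1 - Vᴴ * (V * Vᴴ + Y)⁻¹ * V).det) = 0 := by
    rw [← RCLike.log_re_mul_of_pos hF.det_pos hE.det_pos, ← det_mul,
      ← inv_one_add_mul_inv_mul _ _ hY.isUnit hA.isUnit,
      mul_nonsing_inv _ ((isUnit_iff_isUnit_det _).mp hF.isUnit)]
    simp
  have hgap := hW.posSemidef.re_trace_mul_nonneg
    (hA.posSemidef.conjTranspose_mul_mul_same (U - (V * Vᴴ + Y)⁻¹ * V))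
  have hmse : RCLike.re (W * mseMatrix Y V U).trace
      = RCLike.re (W * (1 - Vᴴ * (V * Vᴴ + Y)⁻¹ * V)).trace
        + RCLike.re (W * ((U - (V * Vᴴ + Y)⁻¹ * V)ᴴ * (V * Vᴴ + Y)
          * (U - (V * Vᴴ + Y)⁻¹ * V))).trace := by
    rw [mseMatrix_eq_add V U hA.isHermitian hA.isUnit, Matrix.mul_add, trace_add, map_add]
  linarith [hW.log_re_det_add_log_re_det_le hE]

lemma re_trace_mul_mseMatrix_eq {Ybar : Matrix n n 𝕜} (hYbar : Ybar.PosDef) (Y : Matrix n n 𝕜)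
    (V Vbar : Matrix n m 𝕜) :
    RCLike.re ((1 + Vbarᴴ * Ybar⁻¹ * Vbar)
        * mseMatrix Y V ((Vbar * Vbarᴴ + Ybar)⁻¹ * Vbar)).trace
      = Fintype.card m + RCLike.re (Vbar * Vbarᴴ * Ybar⁻¹).trace
        - 2 * RCLike.re (Vbarᴴ * Ybar⁻¹ * V).trace
        + RCLike.re ((Ybar⁻¹ - (Vbar * Vbarᴴ + Ybar)⁻¹)ᴴ * (V * Vᴴ + Y)).trace := by
  set W := 1 + Vbarᴴ * Ybar⁻¹ * Vbar with hW
  set Abar := Vbar * Vbarᴴ + Ybar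
  set U := Abar⁻¹ * Vbar
  have hAbar : Abar.PosDef := hYbar.posSemidef_add (posSemidef_self_mul_conjTranspose Vbar)
  have hYbarH : Ybar⁻¹ᴴ = Ybar⁻¹ := hYbar.isHermitian.inv.eq
  have hUW : U * W = Ybar⁻¹ * Vbar :=
    inv_add_mul_mul_one_add_mul_inv_mul _ _ hYbar.isUnit hAbar.isUnit
  have hWU : W * Uᴴ = Vbarᴴ * Ybar⁻¹ := by
    have hWH : Wᴴ = W := by simp [hW, hYbarH, Matrix.mul_assoc]
    rw [← hWH, ← conjTranspose_mul, hUW, conjTranspose_mul, hYbarH]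
  have htrW : W.trace = Fintype.card m + (Vbar * Vbarᴴ * Ybar⁻¹).trace := by
    rw [trace_add, trace_one, trace_mul_cycle]
  have htrUV : (W * (Uᴴ * V)).trace = (Vbarᴴ * Ybar⁻¹ * V).trace := by
    rw [← Matrix.mul_assoc, hWU]
  have htrVU : (W * (Vᴴ * U)).trace = star (Vbarᴴ * Ybar⁻¹ * V).trace := by
    rw [← trace_conjTranspose, trace_mul_comm, Matrix.mul_assoc, hUW]
    simp [hYbarH, Matrix.mul_assoc]
  have htrUAU : (W * (Uᴴ * (V * Vᴴ + Y) * U)).trace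
      = ((Ybar⁻¹ - Abar⁻¹)ᴴ * (V * Vᴴ + Y)).trace := by
    rw [trace_mul_comm, Matrix.mul_assoc, hUW, conjTranspose_sub, hYbarH,
      hAbar.isHermitian.inv.eq, inv_sub_inv (by simp [hYbar.isUnit, hAbar.isUnit]),
      add_sub_cancel_right, conjTranspose_mul, hAbar.isHermitian.inv.eq, trace_mul_comm]
    simp only [Matrix.mul_assoc]
  rw [mseMatrix, Matrix.mul_add, Matrix.mul_sub, Matrix.mul_sub, Matrix.mul_one, trace_add,
    trace_sub, trace_sub, htrW, htrUV, htrVU, htrUAU]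
  simp only [map_add, map_sub, RCLike.natCast_re, RCLike.star_def, RCLike.conj_re]
  ring

end Matrix

/-- Lemma 2 (log-det lower bound used for the RIS update):
`ln det(I + V Vᴴ Y⁻¹) ≥ ln det(I + V̄ V̄ᴴ Ȳ⁻¹) − Tr(V̄ V̄ᴴ Ȳ⁻¹)
  + 2 Re Tr(V̄ᴴ Ȳ⁻¹ V) − Tr((Ȳ⁻¹ − (V̄ V̄ᴴ + Ȳ)⁻¹)ᴴ (V Vᴴ + Y))`. -/
theorem logdet_lower_bound_lemma2
    (n m : ℕ)
    (V Vbar : Matrix (Fin n) (Fin m) ℂ)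
    (Y Ybar : Matrix (Fin n) (Fin n) ℂ)
    (hY : Y.PosDef) (hYbar : Ybar.PosDef) :
    Real.log ((1 + V * Vᴴ * Y⁻¹).det.re)
      ≥ Real.log ((1 + Vbar * Vbarᴴ * Ybar⁻¹).det.re)
        - (Matrix.trace (Vbar * Vbarᴴ * Ybar⁻¹)).re
        + 2 * (Matrix.trace (Vbarᴴ * Ybar⁻¹ * V)).re
        - (Matrix.trace ((Ybar⁻¹ - (Vbar * Vbarᴴ + Ybar)⁻¹)ᴴ * (V * Vᴴ + Y))).re := by
  have hbound := sub_re_trace_mul_mseMatrix_le_log_re_det hY V ((Vbar * Vbarᴴ + Ybar)⁻¹ * Vbar)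
    (hYbar.inv.posSemidef.posDef_one_add_conjTranspose_mul_mul Vbar)
  rw [re_trace_mul_mseMatrix_eq hYbar, Fintype.card_fin] at hbound
  have hdet (A : Matrix (Fin n) (Fin m) ℂ) (B : Matrix (Fin n) (Fin n) ℂ) :
      (1 + A * Aᴴ * B).det = (1 + Aᴴ * B * A).det := by
    rw [Matrix.mul_assoc, det_one_add_mul_comm]
  rw [hdet, hdet]
  simp only [RCLike.re_to_complex] at hbound
  linarith
end

section
/- Fix a user index k among K users, let H be an N_U×N_BS complex channel matrix, σ > 0 a noise level, and for j = 1,…,K let P_j and P_j' be N_BS×N_BS positive semidefinite Hermitian complex matrices (the new transmit covariance matrices and the fixed-point covariance matrices). Define D({P}) = σ²I + Σ_{j≠k} H P_j H^H, S({P}) = H P_k H^H, r₁({P}) = log₂ det(D({P}) + S({P})), r₂({P}) = log₂ det(D({P})), and the per-subband rate r({P}) = r₁({P}) − r₂({P}). Then r({P}) ≥ r₁({P}) − r₂({P'}) − (1/ln 2) Σ_{j≠k} Re Tr( H^H (D({P'}))^{-1} H (P_j − P_j') ). -/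
open Matrix
open scoped ComplexOrder

/-!
`log det` is concave on positive definite matrices, so it lies below its tangent:
`log det A ≤ log det B + Re tr (B⁻¹ (A - B))`. With `T = (B⁻¹)^{1/2}` this is `log x ≤ x - 1`
summed over the eigenvalues of `T A T`. Taking `A = D({P})`, `B = D({P'})`, the difference
`A - B` is `∑_{j ≠ k} H (P_j - P'_j) Hᴴ`, and cyclicity of the trace gives the stated sum.
-/

namespace Matrix

variable {n : Type*} [Fintype n]

lemma sum_trace_mul_eq_trace_mul_sum {R ι m : Type*} [Fintype m] [CommRing R] (s : Finset ι)
    (G : Matrix n m R) (M : Matrix m m R) (H : Matrix m n R) (Q : ι → Matrix n n R) :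
    ∑ j ∈ s, (G * M * H * Q j).trace = (M * ∑ j ∈ s, H * Q j * G).trace := by
  rw [Finset.mul_sum, trace_sum]
  refine Finset.sum_congr rfl fun j _ => ?_
  rw [Matrix.mul_assoc, Matrix.mul_assoc, Matrix.trace_mul_comm G]
  simp only [Matrix.mul_assoc]

variable [DecidableEq n]

lemma PosDef.det_eq_ofReal_re {A : Matrix n n ℂ} (hA : A.PosDef) : A.det = (A.det.re : ℂ) :=
  Complex.eq_re_of_ofReal_le hA.det_pos.le

lemma PosDef.re_det_pos {A : Matrix n n ℂ} (hA : A.PosDef) : 0 < A.det.re :=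
  (Complex.pos_iff.1 hA.det_pos).1

lemma PosDef.log_re_det_le_re_trace_sub_card_s4 {C : Matrix n n ℂ} (hC : C.PosDef) :
    Real.log C.det.re ≤ C.trace.re - Fintype.card n := by
  have hdet : C.det.re = ∏ i, hC.1.eigenvalues i := by
    simp [hC.1.det_eq_prod_eigenvalues, ← Complex.ofReal_prod]
  have htr : C.trace.re = ∑ i, hC.1.eigenvalues i := by
    simp [hC.1.trace_eq_sum_eigenvalues]
  rw [hdet, htr, Real.log_prod fun i _ => (hC.eigenvalues_pos i).ne']
  calc ∑ i, Real.log (hC.1.eigenvalues i) ≤ ∑ i, (hC.1.eigenvalues i - 1) :=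
        Finset.sum_le_sum fun i _ => Real.log_le_sub_one_of_pos (hC.eigenvalues_pos i)
    _ = (∑ i, hC.1.eigenvalues i) - Fintype.card n := by simp [Finset.sum_sub_distrib]

open scoped MatrixOrder in
lemma PosDef.log_re_det_le_log_re_det_add_re_trace {A B : Matrix n n ℂ} (hA : A.PosDef)
    (hB : B.PosDef) :
    Real.log A.det.re ≤ Real.log B.det.re + (B⁻¹ * (A - B)).trace.re := by
  set T := CFC.sqrt B⁻¹
  have hT : T.PosDef := (hB.inv.isStrictlyPositive.sqrt).posDef
  have hTT : T * T = B⁻¹ := CFC.sqrt_mul_sqrt_self _ hB.inv.posSemidef.nonneg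
  have hC : (T * A * T).PosDef := by
    simpa [star_eq_conjTranspose, hT.1.eq] using
      (Matrix.IsUnit.posDef_star_left_conjugate_iff hT.isUnit).mpr hA
  have hdet : (T * A * T).det.re = B.det.re⁻¹ * A.det.re := by
    rw [det_mul, det_mul, mul_right_comm, ← det_mul, hTT, det_nonsing_inv,
      Ring.inverse_eq_inv', hB.det_eq_ofReal_re, hA.det_eq_ofReal_re, ← Complex.ofReal_inv,
      ← Complex.ofReal_mul]
    simp only [Complex.ofReal_re]
  have htr : (T * A * T).trace = (B⁻¹ * A).trace := by
    rw [trace_mul_comm, ← mul_assoc, hTT]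
  have hBinv : (B⁻¹ * B).trace = Fintype.card n := by
    rw [nonsing_inv_mul _ hB.det_pos.ne'.isUnit, trace_one]
  have hlog := hC.log_re_det_le_re_trace_sub_card_s4
  rw [hdet, htr, Real.log_mul (inv_pos.2 hB.re_det_pos).ne' hA.re_det_pos.ne',
    Real.log_inv] at hlog
  rw [mul_sub, trace_sub, hBinv, Complex.sub_re, Complex.natCast_re]
  linarith

lemma posDef_smul_one_add_sum_mul_mul_conjTranspose {𝕜 ι m : Type*} [RCLike 𝕜] [Fintype m]
    (s : Finset ι) {c : 𝕜} (hc : 0 < c) (H : Matrix n m 𝕜) {Q : ι → Matrix m m 𝕜}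
    (hQ : ∀ j ∈ s, (Q j).PosSemidef) :
    (c • (1 : Matrix n n 𝕜) + ∑ j ∈ s, H * Q j * Hᴴ).PosDef :=
  (PosDef.one.smul hc).add_posSemidef
    (posSemidef_sum s fun j hj => (hQ j hj).mul_mul_conjTranspose_same H)

end Matrix

/-- Corollary 1 (concave lower bound on the per-subband TIN rate of user `k`):
with `D({P}) = σ²I + ∑_{j≠k} H P_j Hᴴ`, `S({P}) = H P_k Hᴴ`,
`r = log₂ det(D + S) − log₂ det D`, one has
`r({P}) ≥ r₁({P}) − r₂({P'}) − (1/ln 2) ∑_{j≠k} Re Tr(Hᴴ D({P'})⁻¹ H (P_j − P'_j))`. -/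
theorem rate_lower_bound_covariance_update
    (NU NBS K : ℕ) (k : Fin K)
    (H : Matrix (Fin NU) (Fin NBS) ℂ)
    (σ : ℝ) (hσ : 0 < σ)
    (P P' : Fin K → Matrix (Fin NBS) (Fin NBS) ℂ)
    (hP : ∀ j, (P j).PosSemidef) (hP' : ∀ j, (P' j).PosSemidef) :
    Real.logb 2 ((((σ ^ 2 : ℂ) • (1 : Matrix (Fin NU) (Fin NU) ℂ)
            + ∑ j ∈ Finset.univ.erase k, H * P j * Hᴴ) + H * P k * Hᴴ).det.re)
      - Real.logb 2 (((σ ^ 2 : ℂ) • (1 : Matrix (Fin NU) (Fin NU) ℂ)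
            + ∑ j ∈ Finset.univ.erase k, H * P j * Hᴴ).det.re)
    ≥ Real.logb 2 ((((σ ^ 2 : ℂ) • (1 : Matrix (Fin NU) (Fin NU) ℂ)
            + ∑ j ∈ Finset.univ.erase k, H * P j * Hᴴ) + H * P k * Hᴴ).det.re)
      - Real.logb 2 (((σ ^ 2 : ℂ) • (1 : Matrix (Fin NU) (Fin NU) ℂ)
            + ∑ j ∈ Finset.univ.erase k, H * P' j * Hᴴ).det.re)
      - (1 / Real.log 2) * ∑ j ∈ Finset.univ.erase k,
          (Matrix.trace (Hᴴ * ((σ ^ 2 : ℂ) • (1 : Matrix (Fin NU) (Fin NU) ℂ)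
              + ∑ l ∈ Finset.univ.erase k, H * P' l * Hᴴ)⁻¹ * H
              * (P j - P' j))).re := by
  set s := Finset.univ.erase k
  set D := (σ ^ 2 : ℂ) • (1 : Matrix (Fin NU) (Fin NU) ℂ) + ∑ j ∈ s, H * P j * Hᴴ
  set D' := (σ ^ 2 : ℂ) • (1 : Matrix (Fin NU) (Fin NU) ℂ) + ∑ j ∈ s, H * P' j * Hᴴ
  have hσ2 : (0 : ℂ) < σ ^ 2 := by exact_mod_cast pow_pos hσ 2
  have hD : D.PosDef := posDef_smul_one_add_sum_mul_mul_conjTranspose s hσ2 H fun j _ => hP j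
  have hD' : D'.PosDef := posDef_smul_one_add_sum_mul_mul_conjTranspose s hσ2 H fun j _ => hP' j
  have htrace : ∑ j ∈ s, (Hᴴ * D'⁻¹ * H * (P j - P' j)).trace.re
      = (D'⁻¹ * (D - D')).trace.re := by
    rw [← Complex.re_sum, sum_trace_mul_eq_trace_mul_sum, add_sub_add_left_eq_sub,
      ← Finset.sum_sub_distrib]
    simp only [Matrix.mul_sub, Matrix.sub_mul]
  have htangent := hD.log_re_det_le_log_re_det_add_re_trace hD'
  have hlog2 : 0 < Real.log 2 := Real.log_pos one_lt_two
  rw [ge_iff_le, sub_sub, sub_le_sub_iff_left, htrace, Real.logb, Real.logb]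
  calc Real.log D.det.re / Real.log 2
      ≤ (Real.log D'.det.re + (D'⁻¹ * (D - D')).trace.re) / Real.log 2 := by gcongr
    _ = _ := by ring
end
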